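/- Let Runs : Set (List F) be an arbitrary set of process runs, and call an alignment γ of a log trace e complete if its model projection belongs to Runs. Then the optimal complete-alignment cost equals the minimal edit distance to a run in Runs: ⨅ { κ(γ) : γ a complete alignment of e } = ⨅ { δ(e, f) : f ∈ Runs } (as an equality in ℕ∞, where an empty infimum is ⊤). In particular, an alignment γ of e and some f ∈ Runs with κ(γ) = δ(e, f) = ⨅_{f' ∈ Runs} δ(e, f') is an optimal complete alignment. -/

import Mathlib

variable {E F : Type*}

/-- Edit distance (head recursion, applied to reversed lists to match the
snoc-based recursive definition). -/
noncomputable def editAux (PL : E → ℕ∞) (PM : F → ℕ∞) (Peq : E → F → ℕ∞) : List E → List F → ℕ∞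
  | [], [] => 0
  | a :: e, [] => PL a + editAux PL PM Peq e []
  | [], b :: f => PM b + editAux PL PM Peq [] f
  | a :: e, b :: f =>
      min (editAux PL PM Peq e f + Peq a b)
        (min (PL a + editAux PL PM Peq e (b :: f))
             (PM b + editAux PL PM Peq (a :: e) f))
termination_by e f => e.length + f.length

/-- The edit distance `δ`, satisfying
`δ [] [] = 0`, `δ (e ++ [a]) [] = PL a + δ e []`,
`δ [] (f ++ [b]) = PM b + δ [] f`, and
`δ (e ++ [a]) (f ++ [b]) =
  min (δ e f + Peq a b) (min (PL a + δ e (f ++ [b])) (PM b + δ (e ++ [a]) f))`. -/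
noncomputable def editDist (PL : E → ℕ∞) (PM : F → ℕ∞) (Peq : E → F → ℕ∞)
    (e : List E) (f : List F) : ℕ∞ :=
  editAux PL PM Peq e.reverse f.reverse

/-- Projection of a sequence of moves onto the log component. -/
def logProj (γ : List (Option E × Option F)) : List E := γ.filterMap Prod.fst

/-- Projection of a sequence of moves onto the model component. -/
def modelProj (γ : List (Option E × Option F)) : List F := γ.filterMap Prod.snd

/-- `γ` is an alignment of log trace `e` and process run `f`: it consists of
moves (no `(none, none)` pair), its log projection is `e` and its model
projection is `f`. -/
def IsAlignment (γ : List (Option E × Option F)) (e : List E) (f : List F) : Prop :=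
  (∀ m ∈ γ, m ≠ ((none : Option E), (none : Option F))) ∧
    logProj γ = e ∧ modelProj γ = f

/-- Cost of a single move. -/
def moveCost (PL : E → ℕ∞) (PM : F → ℕ∞) (Peq : E → F → ℕ∞) :
    Option E × Option F → ℕ∞
  | (some a, none) => PL a
  | (none, some b) => PM b
  | (some a, some b) => Peq a b
  | (none, none) => 0

/-- Cost `κ` of an alignment: the sum of the costs of its moves. -/
def alignCost (PL : E → ℕ∞) (PM : F → ℕ∞) (Peq : E → F → ℕ∞)
    (γ : List (Option E × Option F)) : ℕ∞ :=
  (γ.map (moveCost PL PM Peq)).sum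

/-!
Every alignment `γ` bounds the edit distance of its own projections from above: peeling off one
move at a time, each move is one of the three branches of the recursion for `δ`. Conversely,
following the minimising branch of the recursion produces an alignment of `e` and `f` whose cost
is exactly `δ(e, f)`. Hence the infimum of `κ` over complete alignments and the infimum of
`δ(e, ·)` over `Runs` bound each other.
-/

section

variable (PL : E → ℕ∞) (PM : F → ℕ∞) (Peq : E → F → ℕ∞)

theorem logProj_cons (m : Option E × Option F) (γ : List (Option E × Option F)) :
    logProj (m :: γ) = m.1.toList ++ logProj γ := by
  rcases m with ⟨_ | a, _⟩ <;> rfl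

theorem modelProj_cons (m : Option E × Option F) (γ : List (Option E × Option F)) :
    modelProj (m :: γ) = m.2.toList ++ modelProj γ := by
  rcases m with ⟨_, _ | b⟩ <;> rfl

theorem logProj_reverse (γ : List (Option E × Option F)) :
    logProj γ.reverse = (logProj γ).reverse :=
  List.filterMap_reverse

theorem modelProj_reverse (γ : List (Option E × Option F)) :
    modelProj γ.reverse = (modelProj γ).reverse :=
  List.filterMap_reverse

theorem alignCost_cons (m : Option E × Option F) (γ : List (Option E × Option F)) :
    alignCost PL PM Peq (m :: γ) = moveCost PL PM Peq m + alignCost PL PM Peq γ :=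
  List.sum_cons

theorem alignCost_reverse (γ : List (Option E × Option F)) :
    alignCost PL PM Peq γ.reverse = alignCost PL PM Peq γ := by
  simp only [alignCost, List.map_reverse, List.sum_reverse]

theorem IsAlignment.cons {γ : List (Option E × Option F)} {e : List E} {f : List F}
    {m : Option E × Option F} (hm : m ≠ (none, none)) (h : IsAlignment γ e f) :
    IsAlignment (m :: γ) (m.1.toList ++ e) (m.2.toList ++ f) := by
  obtain ⟨hmoves, rfl, rfl⟩ := h
  exact ⟨List.forall_mem_cons.2 ⟨hm, hmoves⟩, logProj_cons m γ, modelProj_cons m γ⟩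

theorem IsAlignment.reverse {γ : List (Option E × Option F)} {e : List E} {f : List F}
    (h : IsAlignment γ e f) : IsAlignment γ.reverse e.reverse f.reverse := by
  obtain ⟨hmoves, rfl, rfl⟩ := h
  exact ⟨fun m hm => hmoves m (List.mem_reverse.1 hm), logProj_reverse γ, modelProj_reverse γ⟩

theorem editAux_append_le (m : Option E × Option F) (e : List E) (f : List F) :
    editAux PL PM Peq (m.1.toList ++ e) (m.2.toList ++ f) ≤
      moveCost PL PM Peq m + editAux PL PM Peq e f := by
  rcases m with ⟨_ | a, _ | b⟩ <;>
    simp only [Option.toList_some, Option.toList_none, List.singleton_append, List.nil_append,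
      moveCost]
  · exact (zero_add _).ge
  · cases e <;> rw [editAux]
    exact (min_le_right _ _).trans (min_le_right _ _)
  · cases f <;> rw [editAux]
    exact (min_le_right _ _).trans (min_le_left _ _)
  · rw [editAux, add_comm]
    exact min_le_left _ _

theorem editAux_logProj_modelProj_le_alignCost (γ : List (Option E × Option F)) :
    editAux PL PM Peq (logProj γ) (modelProj γ) ≤ alignCost PL PM Peq γ := by
  induction γ with
  | nil => exact (editAux.eq_1 PL PM Peq).le
  | cons m γ ih =>
    rw [logProj_cons, modelProj_cons, alignCost_cons]
    exact (editAux_append_le PL PM Peq m _ _).trans (add_le_add_right ih _)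

theorem exists_cons_of_exists_isAlignment {e : List E} {f : List F} {c : ℕ∞}
    (m : Option E × Option F) (hm : m ≠ (none, none))
    (h : ∃ γ, IsAlignment γ e f ∧ alignCost PL PM Peq γ = c) :
    ∃ γ, IsAlignment γ (m.1.toList ++ e) (m.2.toList ++ f) ∧
      alignCost PL PM Peq γ = moveCost PL PM Peq m + c := by
  obtain ⟨γ, hγ, rfl⟩ := h
  exact ⟨m :: γ, hγ.cons hm, alignCost_cons PL PM Peq m γ⟩

theorem exists_isAlignment_alignCost_eq_editAux :
    ∀ (e : List E) (f : List F),
      ∃ γ, IsAlignment γ e f ∧ alignCost PL PM Peq γ = editAux PL PM Peq e f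
  | [], [] => ⟨[], ⟨by simp, rfl, rfl⟩, (editAux.eq_1 PL PM Peq).symm⟩
  | a :: e, [] => by
    rw [editAux]
    exact exists_cons_of_exists_isAlignment PL PM Peq (some a, none) (by simp)
      (exists_isAlignment_alignCost_eq_editAux e [])
  | [], b :: f => by
    rw [editAux]
    exact exists_cons_of_exists_isAlignment PL PM Peq (none, some b) (by simp)
      (exists_isAlignment_alignCost_eq_editAux [] f)
  | a :: e, b :: f => by
    rw [editAux]
    rcases min_choice (editAux PL PM Peq e f + Peq a b)
        (min (PL a + editAux PL PM Peq e (b :: f)) (PM b + editAux PL PM Peq (a :: e) f))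
      with h | h <;> rw [h]
    · rw [add_comm]
      exact exists_cons_of_exists_isAlignment PL PM Peq (some a, some b) (by simp)
        (exists_isAlignment_alignCost_eq_editAux e f)
    · rcases min_choice (PL a + editAux PL PM Peq e (b :: f))
          (PM b + editAux PL PM Peq (a :: e) f) with h' | h' <;> rw [h']
      · exact exists_cons_of_exists_isAlignment PL PM Peq (some a, none) (by simp)
          (exists_isAlignment_alignCost_eq_editAux e (b :: f))
      · exact exists_cons_of_exists_isAlignment PL PM Peq (none, some b) (by simp)
          (exists_isAlignment_alignCost_eq_editAux (a :: e) f)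
termination_by e f => e.length + f.length

theorem editDist_logProj_modelProj_le_alignCost (γ : List (Option E × Option F)) :
    editDist PL PM Peq (logProj γ) (modelProj γ) ≤ alignCost PL PM Peq γ := by
  simpa only [editDist, logProj_reverse, modelProj_reverse, alignCost_reverse] using
    editAux_logProj_modelProj_le_alignCost PL PM Peq γ.reverse

theorem exists_isAlignment_alignCost_eq_editDist (e : List E) (f : List F) :
    ∃ γ, IsAlignment γ e f ∧ alignCost PL PM Peq γ = editDist PL PM Peq e f := by
  obtain ⟨γ, hγ, hcost⟩ :=
    exists_isAlignment_alignCost_eq_editAux PL PM Peq e.reverse f.reverse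
  refine ⟨γ.reverse, ?_, (alignCost_reverse PL PM Peq γ).trans hcost⟩
  simpa only [List.reverse_reverse] using hγ.reverse

end

theorem optimal_complete_alignment_cost
    (PL : E → ℕ∞) (PM : F → ℕ∞) (Peq : E → F → ℕ∞)
    (Runs : Set (List F)) (e : List E) :
    (⨅ γ : {γ : List (Option E × Option F) //
        ∃ f ∈ Runs, IsAlignment γ e f}, alignCost PL PM Peq γ.1) =
      (⨅ f ∈ Runs, editDist PL PM Peq e f) ∧
    ∀ (γ : List (Option E × Option F)) (f : List F), f ∈ Runs →
      IsAlignment γ e f →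
      alignCost PL PM Peq γ = editDist PL PM Peq e f →
      editDist PL PM Peq e f = (⨅ f' ∈ Runs, editDist PL PM Peq e f') →
      alignCost PL PM Peq γ =
        ⨅ γ' : {γ' : List (Option E × Option F) //
          ∃ f' ∈ Runs, IsAlignment γ' e f'}, alignCost PL PM Peq γ'.1 := by
  have hopt : (⨅ γ : {γ : List (Option E × Option F) //
      ∃ f ∈ Runs, IsAlignment γ e f}, alignCost PL PM Peq γ.1) =
        ⨅ f ∈ Runs, editDist PL PM Peq e f := by
    refine le_antisymm (le_iInf₂ fun f hf => ?_) (le_iInf ?_)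
    · obtain ⟨γ, hγ, hcost⟩ := exists_isAlignment_alignCost_eq_editDist PL PM Peq e f
      exact (iInf_le _ ⟨γ, f, hf, hγ⟩).trans_eq hcost
    · rintro ⟨γ, f, hf, -, rfl, rfl⟩
      exact (iInf₂_le _ hf).trans (editDist_logProj_modelProj_le_alignCost PL PM Peq γ)
  exact ⟨hopt, fun γ f _ _ hcost hdist => by rw [hcost, hdist, hopt]⟩
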